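/- Let 0 < α < 2, n ≥ 2. Combining the estimates: for fixed x in the upper half space and fixed R with |x| < R, there is a constant C (depending on x, R, n, α, and a local bound on u) such that the quantity I₂₂ = ∫_{|y−x_r|>r, |y|≤R, y_n>0} ((2x_n r − |x|²)/(2y_n r − |y|²))^(α/2) |x − y|^(−(n+1)) dy satisfies I₂₂ ≤ C · r^(α/2 − 1) for all sufficiently large r; in particular I₂₂ → 0 as r → ∞. -/

import Mathlib

/-!
On the domain of integration `|y|² - 2 y_n r = |y - x_r|² - r² > 0`, so `y_n < R² / (2r)`; for large
`r` this gives `|x - y| ≥ x_n / 2`, and the integrand is at most a constant times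
`r^{α/2} (|y|² - 2 y_n r)^{-α/2}`. Slice along `y = (y', t)` with `t = y_n` and `s = |y'|²`: the
quadratic `t² - 2rt + s` is positive on the slice only for `0 < t < c := r - √(r² - s)`, where it
is at least `r (c - t)`, and `cr ≤ s ≤ R²`. Hence each slice contributes at most
`(R²)^{1-α/2} / ((1 - α/2) r)`, and integrating over the box `|y'_j| ≤ R` gives
`I₂₂ = O(r^{α/2 - 1})`, which tends to `0` since `α < 2`.
-/

/-- The index of the last coordinate. -/
def lastIdx (n : ℕ) (hn : 2 ≤ n) : Fin n := ⟨n - 1, by omega⟩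

/-- The point `x_r = (0, …, 0, r)`. -/
noncomputable def xrPt (n : ℕ) (hn : 2 ≤ n) (r : ℝ) : EuclideanSpace ℝ (Fin n) :=
  EuclideanSpace.single (lastIdx n hn) r

/-- The quantity `I₂₂` from the proof of the Liouville theorem. -/
noncomputable def I22 (α : ℝ) (n : ℕ) (hn : 2 ≤ n)
    (x : EuclideanSpace ℝ (Fin n)) (R r : ℝ) : ℝ :=
  ∫ y in {y : EuclideanSpace ℝ (Fin n) |
      r < dist y (xrPt n hn r) ∧ ‖y‖ ≤ R ∧ 0 < y (lastIdx n hn)},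
    ((2 * x (lastIdx n hn) * r - ‖x‖ ^ 2) / (2 * y (lastIdx n hn) * r - ‖y‖ ^ 2)) ^ (α / 2) /
      dist x y ^ (n + 1)

open MeasureTheory ENNReal

theorem EuclideanSpace.lintegral_eq_lintegral_insertNth {m : ℕ} (i : Fin (m + 1))
    {f : EuclideanSpace ℝ (Fin (m + 1)) → ℝ≥0∞} (hf : Measurable f) :
    ∫⁻ y, f y = ∫⁻ y' : Fin m → ℝ, ∫⁻ t, f (WithLp.toLp 2 (Fin.insertNth i t y')) := by
  have hΦ : MeasurePreserving
      (fun z : ℝ × (Fin m → ℝ) => WithLp.toLp 2 (Fin.insertNth i z.1 z.2 : Fin (m + 1) → ℝ)) :=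
    ((EuclideanSpace.volume_preserving_symm_measurableEquiv_toLp (Fin (m + 1))).symm _).comp
      (volume_preserving_piFinSuccAbove (fun _ : Fin (m + 1) => ℝ) i).symm
  rw [← hΦ.lintegral_comp hf]
  exact lintegral_prod_symm' _ (hf.comp hΦ.measurable)

theorem EuclideanSpace.norm_toLp_insertNth_sq {m : ℕ} (i : Fin (m + 1)) (t : ℝ) (y' : Fin m → ℝ) :
    ‖(WithLp.toLp 2 (Fin.insertNth i t y') : EuclideanSpace ℝ (Fin (m + 1)))‖ ^ 2 =
      t ^ 2 + ∑ j, y' j ^ 2 := by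
  simp [EuclideanSpace.real_norm_sq_eq, Fin.sum_univ_succAbove _ i]

theorem EuclideanSpace.dist_single_sq {n : ℕ} (y : EuclideanSpace ℝ (Fin n)) (i : Fin n) (r : ℝ) :
    dist y (EuclideanSpace.single i r) ^ 2 = ‖y‖ ^ 2 - 2 * y i * r + r ^ 2 := by
  rw [dist_eq_norm, norm_sub_sq_real, EuclideanSpace.inner_single_right, PiLp.norm_single]
  simp
  ring

theorem EuclideanSpace.lt_dist_single_iff {n : ℕ} {r : ℝ} (hr : 0 ≤ r)
    (y : EuclideanSpace ℝ (Fin n)) (i : Fin n) :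
    r < dist y (EuclideanSpace.single i r) ↔ 2 * y i * r < ‖y‖ ^ 2 := by
  rw [← pow_lt_pow_iff_left₀ hr dist_nonneg two_ne_zero, dist_single_sq]
  constructor <;> intro h <;> linarith

theorem lintegral_Ioo_rpow_neg_sub {β c : ℝ} (hβ : β < 1) (hc : 0 ≤ c) :
    ∫⁻ t in Set.Ioo 0 c, ENNReal.ofReal ((c - t) ^ (-β)) =
      ENNReal.ofReal (c ^ (1 - β) / (1 - β)) := by
  have hint : IntervalIntegrable (fun t : ℝ => (c - t) ^ (-β)) volume 0 c := by
    simpa using ((intervalIntegral.intervalIntegrable_rpow' (r := -β) (a := 0) (b := c)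
      (by linarith)).comp_sub_left c).symm
  have hval : ∫ t in Set.Ioo 0 c, (c - t) ^ (-β) = c ^ (1 - β) / (1 - β) := by
    rw [← integral_Ioc_eq_integral_Ioo, ← intervalIntegral.integral_of_le hc,
      intervalIntegral.integral_comp_sub_left (fun u : ℝ => u ^ (-β)) c, sub_self, sub_zero,
      integral_rpow (Or.inl (by linarith)), Real.zero_rpow (by linarith)]
    ring_nf
  rw [← hval, ofReal_integral_eq_lintegral_ofReal]
  · exact ((intervalIntegrable_iff_integrableOn_Ioc_of_le hc).mp hint).mono_set
      Set.Ioo_subset_Ioc_self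
  · filter_upwards [ae_restrict_mem measurableSet_Ioo] with t ht
    exact Real.rpow_nonneg (by linarith [ht.2]) _

/-- `r ∓ σ` are the roots of `t ↦ t ^ 2 - 2 * t * r + s`, and `t ≤ σ` keeps `t` at distance at
least `r` from the larger one. -/
theorem lt_sub_and_mul_le_of_quadratic_pos {t s r σ : ℝ} (hr : 0 ≤ r) (ht : 0 < t)
    (htr : t ^ 2 + s ≤ r ^ 2) (hpos : 2 * t * r < t ^ 2 + s) (hσ : 0 ≤ σ)
    (hσsq : σ ^ 2 = r ^ 2 - s) :
    t < r - σ ∧ (r - σ - t) * r ≤ t ^ 2 + s - 2 * t * r := by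
  have htσ : t ≤ σ := by nlinarith
  have hfactor : t ^ 2 + s - 2 * t * r = (r - σ - t) * (r + σ - t) := by
    linear_combination hσsq
  have hlt : t < r - σ := by
    by_contra! h
    nlinarith [mul_nonpos_of_nonpos_of_nonneg (sub_nonpos.mpr h) (by linarith : 0 ≤ r + σ - t)]
  exact ⟨hlt, hfactor ▸ mul_le_mul_of_nonneg_left (by linarith) (by linarith)⟩

theorem lintegral_rpow_neg_quadratic_le {β r R s : ℝ} (hβ0 : 0 ≤ β) (hβ1 : β < 1) (hr : 0 < r)
    (hR : 0 ≤ R) (hRr : R ≤ r) (hs0 : 0 ≤ s) (hsR : s ≤ R ^ 2) :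
    ∫⁻ t in {t : ℝ | 2 * t * r < t ^ 2 + s ∧ t ^ 2 + s ≤ R ^ 2 ∧ 0 < t},
        ENNReal.ofReal ((t ^ 2 + s - 2 * t * r) ^ (-β)) ≤
      ENNReal.ofReal ((R ^ 2) ^ (1 - β) / ((1 - β) * r)) := by
  set A := {t : ℝ | 2 * t * r < t ^ 2 + s ∧ t ^ 2 + s ≤ R ^ 2 ∧ 0 < t}
  set σ := √(r ^ 2 - s)
  have hσ : 0 ≤ σ := Real.sqrt_nonneg _
  have hσsq : σ ^ 2 = r ^ 2 - s := Real.sq_sqrt (by nlinarith)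
  set c := r - σ
  have hc : 0 ≤ c := by nlinarith
  have hcr : c * r ≤ R ^ 2 := by nlinarith
  have hfiber : ∀ t ∈ A, t ∈ Set.Ioo 0 c ∧ (c - t) * r ≤ t ^ 2 + s - 2 * t * r :=
    fun t ⟨hpos, htR, ht⟩ =>
      have h := lt_sub_and_mul_le_of_quadratic_pos hr.le ht
        (htR.trans (pow_le_pow_left₀ hR hRr 2)) hpos hσ hσsq
      ⟨⟨ht, h.1⟩, h.2⟩
  calc ∫⁻ t in A, ENNReal.ofReal ((t ^ 2 + s - 2 * t * r) ^ (-β))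
      ≤ ∫⁻ t in A, ENNReal.ofReal (r ^ (-β) * (c - t) ^ (-β)) := by
        refine setLIntegral_mono' (by measurability) fun t ht => ENNReal.ofReal_le_ofReal ?_
        obtain ⟨⟨ht0, htc⟩, hle⟩ := hfiber t ht
        rw [← Real.mul_rpow hr.le (by linarith), mul_comm r]
        exact Real.rpow_le_rpow_of_nonpos (by nlinarith) hle (by linarith)
    _ ≤ ∫⁻ t in Set.Ioo 0 c, ENNReal.ofReal (r ^ (-β) * (c - t) ^ (-β)) :=
        lintegral_mono_set fun t ht => (hfiber t ht).1
    _ = ENNReal.ofReal (r ^ (-β) * (c ^ (1 - β) / (1 - β))) := by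
        simp_rw [ENNReal.ofReal_mul (Real.rpow_nonneg hr.le _)]
        rw [lintegral_const_mul' _ _ ofReal_ne_top, lintegral_Ioo_rpow_neg_sub hβ1 hc]
    _ ≤ ENNReal.ofReal ((R ^ 2) ^ (1 - β) / ((1 - β) * r)) := by
        refine ENNReal.ofReal_le_ofReal ?_
        have h1β : 0 < 1 - β := by linarith
        calc r ^ (-β) * (c ^ (1 - β) / (1 - β)) = (c * r) ^ (1 - β) / ((1 - β) * r) := by
              rw [Real.mul_rpow hc hr.le, Real.rpow_sub hr, Real.rpow_one, Real.rpow_neg hr.le]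
              field_simp
          _ ≤ (R ^ 2) ^ (1 - β) / ((1 - β) * r) := by gcongr

theorem lintegral_rpow_neg_norm_sq_sub_le {m : ℕ} (i : Fin (m + 1)) {β r R : ℝ} (hβ0 : 0 ≤ β)
    (hβ1 : β < 1) (hr : 0 < r) (hR : 0 ≤ R) (hRr : R ≤ r) :
    ∫⁻ y in {y : EuclideanSpace ℝ (Fin (m + 1)) | 2 * y i * r < ‖y‖ ^ 2 ∧ ‖y‖ ≤ R ∧ 0 < y i},
        ENNReal.ofReal ((‖y‖ ^ 2 - 2 * y i * r) ^ (-β)) ≤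
      ENNReal.ofReal ((R ^ 2) ^ (1 - β) / ((1 - β) * r) * (2 * R) ^ m) := by
  set T := {y : EuclideanSpace ℝ (Fin (m + 1)) | 2 * y i * r < ‖y‖ ^ 2 ∧ ‖y‖ ≤ R ∧ 0 < y i}
  set f := fun y : EuclideanSpace ℝ (Fin (m + 1)) =>
    ENNReal.ofReal ((‖y‖ ^ 2 - 2 * y i * r) ^ (-β))
  set K := (R ^ 2) ^ (1 - β) / ((1 - β) * r)
  have hT : MeasurableSet T := by measurability
  set box : Set (Fin m → ℝ) := Set.univ.pi fun _ => Set.Icc (-R) R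
  have hfiber : ∀ y' : Fin m → ℝ,
      ∫⁻ t, T.indicator f (WithLp.toLp 2 (Fin.insertNth i t y')) ≤
        box.indicator (fun _ => ENNReal.ofReal K) y' := by
    intro y'
    set s := ∑ j, y' j ^ 2
    have hslice : ∀ t, T.indicator f (WithLp.toLp 2 (Fin.insertNth i t y')) =
        {t : ℝ | 2 * t * r < t ^ 2 + s ∧ t ^ 2 + s ≤ R ^ 2 ∧ 0 < t}.indicator
          (fun t => ENNReal.ofReal ((t ^ 2 + s - 2 * t * r) ^ (-β))) t := by
      intro t
      simp [Set.indicator, T, f, s, ← sq_le_sq₀ (norm_nonneg _) hR,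
        EuclideanSpace.norm_toLp_insertNth_sq]
    simp_rw [hslice]
    rw [lintegral_indicator (by measurability)]
    by_cases hs : s ≤ R ^ 2
    · have hbox : y' ∈ box := fun j _ => abs_le_of_sq_le_sq'
          ((Finset.single_le_sum (fun k _ => sq_nonneg (y' k)) (Finset.mem_univ j)).trans hs) hR
      rw [Set.indicator_of_mem hbox]
      exact lintegral_rpow_neg_quadratic_le hβ0 hβ1 hr hR hRr (by positivity) hs
    · have hempty : {t : ℝ | 2 * t * r < t ^ 2 + s ∧ t ^ 2 + s ≤ R ^ 2 ∧ 0 < t} = ∅ :=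
        Set.eq_empty_of_forall_notMem fun t ⟨_, htR, _⟩ => hs (by nlinarith)
      simp [hempty]
  calc ∫⁻ y in T, f y = ∫⁻ y, T.indicator f y := (lintegral_indicator hT f).symm
    _ = ∫⁻ y', ∫⁻ t, T.indicator f (WithLp.toLp 2 (Fin.insertNth i t y')) :=
        EuclideanSpace.lintegral_eq_lintegral_insertNth i (by measurability)
    _ ≤ ∫⁻ y', box.indicator (fun _ => ENNReal.ofReal K) y' := lintegral_mono hfiber
    _ = ENNReal.ofReal (K * (2 * R) ^ m) := by
        rw [lintegral_indicator_const (by measurability), volume_pi_pi]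
        simp only [Real.volume_Icc, sub_neg_eq_add, Finset.prod_const, Finset.card_univ,
          Fintype.card_fin]
        rw [← ENNReal.ofReal_pow (by linarith), ← ENNReal.ofReal_mul (by positivity), two_mul]

/-- For `E < 0` the base is negative, where `Real.rpow` is `exp (β log |b|) cos (βπ)`: only its
absolute value is under control. -/
theorem abs_rpow_div_of_neg_le {N M E β : ℝ} (hN : 0 ≤ N) (hNM : N ≤ M) (hE : E < 0)
    (hβ : 0 ≤ β) : |(N / E) ^ β| ≤ M ^ β * (-E) ^ (-β) := by
  refine (Real.abs_rpow_le_abs_rpow _ _).trans ?_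
  rw [abs_div, abs_of_nonneg hN, abs_of_neg hE, Real.rpow_neg (by linarith), ← div_eq_mul_inv,
    ← Real.div_rpow (by linarith) (by linarith)]
  exact Real.rpow_le_rpow (div_nonneg hN (by linarith)) (by gcongr; linarith) hβ

theorem EuclideanSpace.sub_apply_le_dist {n : ℕ} (x y : EuclideanSpace ℝ (Fin n)) (i : Fin n) :
    x i - y i ≤ dist x y :=
  (le_abs_self _).trans (PiLp.dist_apply_le x y i)

theorem norm_rpow_div_dist_pow_le {n : ℕ} (i : Fin n) {x y : EuclideanSpace ℝ (Fin n)}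
    {β r R : ℝ} (k : ℕ) (hβ : 0 ≤ β) (hr : 0 < r) (hx : 0 < x i) (hxr : ‖x‖ ^ 2 ≤ 2 * x i * r)
    (hRx : R ^ 2 ≤ x i * r) (hy : 2 * y i * r < ‖y‖ ^ 2) (hyR : ‖y‖ ≤ R) :
    ‖((2 * x i * r - ‖x‖ ^ 2) / (2 * y i * r - ‖y‖ ^ 2)) ^ β / dist x y ^ k‖ ≤
      (2 * x i * r) ^ β / (x i / 2) ^ k * (‖y‖ ^ 2 - 2 * y i * r) ^ (-β) := by
  have hyx : y i < x i / 2 := by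
    have : 2 * y i * r < x i * r := by nlinarith [norm_nonneg y]
    nlinarith
  have hdist : x i / 2 ≤ dist x y := by linarith [EuclideanSpace.sub_apply_le_dist x y i]
  have hbound := abs_rpow_div_of_neg_le (sub_nonneg.mpr hxr) (sub_le_self _ (sq_nonneg ‖x‖))
    (sub_neg.mpr hy) hβ
  rw [neg_sub] at hbound
  rw [norm_div, norm_pow, Real.norm_eq_abs, Real.norm_eq_abs, abs_dist, div_mul_eq_mul_div]
  exact div_le_div₀ (by positivity) hbound (by positivity)
    (pow_le_pow_left₀ (by positivity) hdist k)

theorem abs_I22_le {α : ℝ} (hα0 : 0 ≤ α) (hα2 : α < 2) {n : ℕ} (hn : 2 ≤ n)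
    {x : EuclideanSpace ℝ (Fin n)} (hx : 0 < x (lastIdx n hn)) {R r : ℝ} (hR : 0 ≤ R)
    (hr : 0 < r) (hRr : R ≤ r) (hxr : ‖x‖ ^ 2 ≤ 2 * x (lastIdx n hn) * r)
    (hRx : R ^ 2 ≤ x (lastIdx n hn) * r) :
    |I22 α n hn x R r| ≤ (2 * x (lastIdx n hn)) ^ (α / 2) / (x (lastIdx n hn) / 2) ^ (n + 1) *
      ((R ^ 2) ^ (1 - α / 2) / (1 - α / 2)) * (2 * R) ^ (n - 1) * r ^ (α / 2 - 1) := by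
  obtain ⟨m, rfl⟩ : ∃ m, n = m + 1 := ⟨n - 1, by omega⟩
  set i := lastIdx (m + 1) hn
  have hβ0 : 0 ≤ α / 2 := by linarith
  have hβ1 : α / 2 < 1 := by linarith
  set β := α / 2
  set T := {y : EuclideanSpace ℝ (Fin (m + 1)) | 2 * y i * r < ‖y‖ ^ 2 ∧ ‖y‖ ≤ R ∧ 0 < y i}
  have hT : MeasurableSet T := by measurability
  have hS : {y | r < dist y (xrPt (m + 1) hn r) ∧ ‖y‖ ≤ R ∧ 0 < y i} = T := by
    simp only [xrPt, EuclideanSpace.lt_dist_single_iff hr.le]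
    rfl
  set P := (2 * x i * r) ^ β / (x i / 2) ^ (m + 1 + 1) with hP
  have hlint : ∫⁻ y in T, ENNReal.ofReal ‖((2 * x i * r - ‖x‖ ^ 2) /
        (2 * y i * r - ‖y‖ ^ 2)) ^ β / dist x y ^ (m + 1 + 1)‖ ≤
      ENNReal.ofReal (P * ((R ^ 2) ^ (1 - β) / ((1 - β) * r) * (2 * R) ^ m)) :=
    calc _ ≤ ∫⁻ y in T, ENNReal.ofReal P * ENNReal.ofReal ((‖y‖ ^ 2 - 2 * y i * r) ^ (-β)) :=
          setLIntegral_mono' hT fun y ⟨hy, hyR, _⟩ => by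
            rw [← ENNReal.ofReal_mul (by positivity)]
            exact ENNReal.ofReal_le_ofReal
              (norm_rpow_div_dist_pow_le i _ hβ0 hr hx hxr hRx hy hyR)
      _ ≤ _ := by
          rw [lintegral_const_mul' _ _ ofReal_ne_top, ENNReal.ofReal_mul (by positivity)]
          exact mul_le_mul_right (lintegral_rpow_neg_norm_sq_sub_le i hβ0 hβ1 hr hR hRr) _
  calc |I22 α (m + 1) hn x R r| ≤ P * ((R ^ 2) ^ (1 - β) / ((1 - β) * r) * (2 * R) ^ m) := by
        rw [I22, hS, ← Real.norm_eq_abs]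
        exact (norm_integral_le_lintegral_norm _).trans
          (ENNReal.toReal_le_of_le_ofReal (by positivity) hlint)
    _ = _ := by
        rw [hP, Real.mul_rpow (by positivity) hr.le, Real.rpow_sub_one hr.ne', Nat.add_sub_cancel]
        field_simp

theorem stmt_14 (α : ℝ) (hα0 : 0 < α) (hα2 : α < 2) (n : ℕ) (hn : 2 ≤ n)
    (x : EuclideanSpace ℝ (Fin n)) (hx : 0 < x (lastIdx n hn))
    (R : ℝ) (hR : ‖x‖ < R) :
    (∃ C > (0:ℝ), ∃ r₀ : ℝ, ∀ r ≥ r₀, I22 α n hn x R r ≤ C * r ^ (α / 2 - 1)) ∧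
    Filter.Tendsto (fun r : ℝ => I22 α n hn x R r) Filter.atTop (nhds 0) := by
  set xn := x (lastIdx n hn)
  have hR0 : 0 < R := (norm_nonneg x).trans_lt hR
  have hβ1 : 0 < 1 - α / 2 := by linarith
  set C := (2 * xn) ^ (α / 2) / (xn / 2) ^ (n + 1) * ((R ^ 2) ^ (1 - α / 2) / (1 - α / 2)) *
    (2 * R) ^ (n - 1)
  have hC : 0 < C := by positivity
  set r₀ := max R (max (R ^ 2 / xn) (‖x‖ ^ 2 / xn))
  have hbound : ∀ r ≥ r₀, |I22 α n hn x R r| ≤ C * r ^ (α / 2 - 1) := fun r hr => by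
    obtain ⟨hRr, hRx, hxr⟩ : R ≤ r ∧ R ^ 2 / xn ≤ r ∧ ‖x‖ ^ 2 / xn ≤ r := by
      simpa only [r₀, ge_iff_le, max_le_iff] using hr
    rw [div_le_iff₀ hx] at hRx hxr
    exact abs_I22_le hα0.le hα2 hn hx hR0.le (hR0.trans_le hRr) hRr (by nlinarith) (by linarith)
  have hdecay : Filter.Tendsto (fun r : ℝ => C * r ^ (α / 2 - 1)) Filter.atTop (nhds 0) := by
    simpa [neg_sub] using (tendsto_rpow_neg_atTop hβ1).const_mul C
  exact ⟨⟨C, hC, r₀, fun r hr => (le_abs_self _).trans (hbound r hr)⟩,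
    squeeze_zero_norm' (Filter.eventually_atTop.2 ⟨r₀, hbound⟩) hdecay⟩
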